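/- arXiv:2307.05303 — 6 statements merged into one kernel-verified Lean document; each statement's English description precedes it below -/
import Mathlib

section
/- For each positive integer m, the finite sequence γ with γ_r = ((-1)^{r+1}/r) · C(2m, m+r)/C(2m, m-1) for 1 ≤ r ≤ m and γ_r = 0 for r > m satisfies the vanishing conditions ∑_{r≥1} r^{2p+1} γ_r = 0 for all p = 1, …, m−1. -/
/-!
The alternating sum `∑ₖ (-1)ᵏ C(2m, k) (k - m)^{2p}` is a `2m`-th forward difference of a
polynomial of degree `2p < 2m`, hence zero. Its summand is invariant under `k ↦ 2m - k` and
vanishes at `k = m`, so the half `∑_{r=1}^m (-1)^r C(2m, m+r) r^{2p}` vanishes as well, and up to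
the factor `-1 / C(2m, m-1)` this half is `∑_r r^{2p+1} γ_r`.
-/

open Finset

lemma neg_one_pow_sub_eq_pow_add {R : Type*} [Monoid R] [HasDistribNeg R] {n k : ℕ}
    (hk : k ≤ n) :
    (-1 : R) ^ (n - k) = (-1) ^ (n + k) := by
  simp [show n + k = n - k + 2 * k by lia, pow_add]

theorem sum_range_neg_one_pow_mul_choose_mul_add_pow_eq_zero {R : Type*} [CommRing R]
    {j n : ℕ} (hj : j < n) (x : R) :
    ∑ k ∈ range (n + 1), (-1) ^ k * n.choose k * (x + k) ^ j = 0 := by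
  have h := congrFun (fwdDiff_iter_pow_eq_zero_of_lt (R := R) hj) x
  rw [fwdDiff_iter_eq_sum_shift, Pi.zero_apply] at h
  calc ∑ k ∈ range (n + 1), (-1) ^ k * n.choose k * (x + k) ^ j
      = (-1) ^ n *
          ∑ k ∈ range (n + 1), ((-1 : ℤ) ^ (n - k) * n.choose k) • (x + k • 1) ^ j := by
        rw [mul_sum]
        refine sum_congr rfl fun k hk ↦ ?_
        have hsq : (-1 : R) ^ n * (-1) ^ n = 1 := by rw [← mul_pow]; simp
        rw [zsmul_eq_mul, nsmul_one, Int.cast_mul, Int.cast_pow, Int.cast_neg, Int.cast_one,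
          Int.cast_natCast, neg_one_pow_sub_eq_pow_add (Nat.le_of_lt_succ (mem_range.mp hk)),
          pow_add]
        linear_combination (-(-1) ^ k * n.choose k * (x + k) ^ j : R) * hsq
    _ = 0 := by rw [h, mul_zero]

lemma sum_range_two_mul_add_one_of_symm {M : Type*} [AddCommMonoid M] (f : ℕ → M) (m : ℕ)
    (hf : ∀ k ≤ 2 * m, f (2 * m - k) = f k) :
    ∑ k ∈ range (2 * m + 1), f k = f m + 2 • ∑ r ∈ Icc 1 m, f (m + r) := by
  have hIcc : ∑ r ∈ Icc 1 m, f (m + r) = ∑ j ∈ range m, f (m + 1 + j) := by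
    rw [← Ico_add_one_right_eq_Icc, sum_Ico_eq_sum_range, add_tsub_cancel_right]
    simp only [add_comm 1, add_assoc]
  have hlow : ∑ k ∈ range m, f k = ∑ j ∈ range m, f (m + 1 + j) := by
    rw [← sum_range_reflect]
    refine sum_congr rfl fun j hj ↦ ?_
    rw [mem_range] at hj
    rw [← hf _ (by lia), show 2 * m - (m - 1 - j) = m + 1 + j by lia]
  rw [show 2 * m + 1 = (m + 1) + m by lia, sum_range_add, sum_range_succ, hlow, hIcc, two_nsmul]
  abel

theorem sum_Icc_neg_one_pow_mul_choose_mul_pow_eq_zero {R : Type*} [CommRing R]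
    [IsAddTorsionFree R] {m p : ℕ} (hp : 0 < p) (hpm : p < m) :
    ∑ r ∈ Icc 1 m, (-1 : R) ^ r * (2 * m).choose (m + r) * (r : R) ^ (2 * p) = 0 := by
  set f : ℕ → R := fun k ↦ (-1) ^ k * (2 * m).choose k * (-m + k : R) ^ (2 * p)
  have hsymm : ∀ k ≤ 2 * m, f (2 * m - k) = f k := by
    intro k hk
    have hreflect : (-m + (2 * m - k : ℕ) : R) = -(-m + k) := by
      push_cast [Nat.cast_sub hk]; ring
    simp only [f, hreflect, Nat.choose_symm hk, neg_one_pow_sub_eq_pow_add hk, pow_add, pow_mul,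
      one_pow, one_mul, neg_sq]
  have hsum : ∑ k ∈ range (2 * m + 1), f k = 0 :=
    sum_range_neg_one_pow_mul_choose_mul_add_pow_eq_zero (by lia) (-m : R)
  have hcentre : f m = 0 := by simp [f, hp.ne']
  have hshift : ∑ r ∈ Icc 1 m, f (m + r)
      = (-1) ^ m *
          ∑ r ∈ Icc 1 m, (-1 : R) ^ r * (2 * m).choose (m + r) * (r : R) ^ (2 * p) := by
    rw [mul_sum]
    refine sum_congr rfl fun r _ ↦ ?_
    simp only [f, Nat.cast_add, neg_add_cancel_left, pow_add]
    ring
  rw [sum_range_two_mul_add_one_of_symm f m hsymm, hcentre, zero_add, hshift,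
    smul_eq_zero] at hsum
  simpa using hsum

theorem stmt1_general (m : ℕ) (γ : ℕ → ℝ)
    (hγ : ∀ r, 1 ≤ r → r ≤ m →
      γ r = (-1 : ℝ) ^ (r + 1) / r *
        ((Nat.choose (2 * m) (m + r) : ℝ) / (Nat.choose (2 * m) (m - 1) : ℝ))) :
    ∀ p, 1 ≤ p → p ≤ m - 1 →
      ∑ r ∈ Icc 1 m, (r : ℝ) ^ (2 * p + 1) * γ r = 0 := by
  intro p hp hpm
  have hterm : ∀ r ∈ Icc 1 m, (r : ℝ) ^ (2 * p + 1) * γ r =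
      -((2 * m).choose (m - 1) : ℝ)⁻¹ *
        ((-1) ^ r * (2 * m).choose (m + r) * (r : ℝ) ^ (2 * p)) := by
    intro r hr
    obtain ⟨hr1, hrm⟩ := mem_Icc.mp hr
    have hr0 : (r : ℝ) ≠ 0 := by positivity
    rw [hγ r hr1 hrm]
    field_simp
    ring
  rw [sum_congr rfl hterm, ← mul_sum, sum_Icc_neg_one_pow_mul_choose_mul_pow_eq_zero hp (by lia),
    mul_zero]

/-- The coefficients of the order-`m` minimal multicritical Schur measure
satisfy the multicriticality vanishing conditions
`∑_{r≥1} r^{2p+1} γ_r = 0` for `p = 1, …, m−1`. -/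
theorem stmt1 (m : ℕ) (hm : 0 < m) (γ : ℕ → ℝ)
    (hγ : ∀ r, 1 ≤ r → r ≤ m →
      γ r = (-1 : ℝ) ^ (r + 1) / r *
        ((Nat.choose (2 * m) (m + r) : ℝ) / (Nat.choose (2 * m) (m - 1) : ℝ)))
    (hγ0 : ∀ r, m < r → γ r = 0) :
    ∀ p, 1 ≤ p → p ≤ m - 1 →
      ∑ r ∈ Icc 1 m, (r : ℝ) ^ (2 * p + 1) * γ r = 0 :=
  stmt1_general m γ hγ
end

section
/- Let m be a positive integer and define γ_r = ((-1)^{r+1}/r) · C(2m, m+r)/C(2m, m-1) for 1 ≤ r ≤ m, γ_r = 0 otherwise. Then for all real z > 0, ∑_{r=1}^{m} r γ_r (z^r + z^{-r}) − (m+1)/m = (−1)^{m+1} C(2m, m-1)^{-1} (z^{1/2} − z^{-1/2})^{2m}. -/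
/-!
With `x = √z` the right-hand side is, up to the factor `(-1)^(m+1) / C(2m, m-1)`, the Laurent
polynomial `(x - x⁻¹)^(2m) = ∑ₖ (-1)^k C(2m, k) x^(2(k - m))`. Pairing the terms `k = m ± r`
(which carry the same coefficient) gives `(-1)^m (C(2m, m) + ∑ᵣ (-1)^r C(2m, m+r) (z^r + z^(-r)))`;
the pairs are the `γ`-sum and the central term is `(m+1)/m = C(2m, m) / C(2m, m-1)`.
-/

open Finset

theorem Finset.sum_range_two_mul_add_one_eq {M : Type*} [AddCommMonoid M] (m : ℕ) (f : ℕ → M) :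
    ∑ k ∈ range (2 * m + 1), f k = f m + ∑ r ∈ Icc 1 m, (f (m - r) + f (m + r)) := by
  have hIcc : ∀ g : ℕ → M, ∑ r ∈ Icc 1 m, g r = ∑ i ∈ range m, g (i + 1) := fun g => by
    rw [← Ico_add_one_right_eq_Icc, sum_Ico_eq_sum_range]
    simp only [Nat.add_sub_cancel, add_comm 1]
  rw [show 2 * m + 1 = m + (m + 1) by ring, sum_range_add, sum_range_succ', ← sum_range_reflect,
    hIcc, sum_add_distrib]
  have hlow : ∀ i ∈ range m, f (m - 1 - i) = f (m - (i + 1)) := fun i _ => by congr 1; omega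
  simp only [sum_congr rfl hlow, add_zero]
  abel

theorem sub_inv_pow_two_mul {K : Type*} [Field K] {x : K} (hx : x ≠ 0) (m : ℕ) :
    (x - x⁻¹) ^ (2 * m) =
      ∑ k ∈ range (2 * m + 1), (-1) ^ k * ((2 * m).choose k : K) * x ^ (2 * ((k : ℤ) - m)) := by
  rw [sub_pow]
  refine sum_congr rfl fun k hk => ?_
  have hk : k ≤ 2 * m := Nat.lt_succ_iff.mp (mem_range.mp hk)
  have hpow : x ^ k * x⁻¹ ^ (2 * m - k) = x ^ (2 * ((k : ℤ) - m)) := by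
    rw [← zpow_natCast, ← zpow_natCast, inv_zpow', ← zpow_add₀ hx]
    congr 1; push_cast [hk]; ring
  have hsign : (-1 : K) ^ (k + 2 * m) = (-1) ^ k :=
    neg_one_pow_congr (by simp [Nat.even_add])
  rw [hsign, mul_assoc _ (x ^ k), hpow]
  ring

theorem sub_inv_pow_two_mul_eq_sum_Icc {K : Type*} [Field K] {x : K} (hx : x ≠ 0) (m : ℕ) :
    (x - x⁻¹) ^ (2 * m) = (-1) ^ m * ((2 * m).choose m +
      ∑ r ∈ Icc 1 m, (-1) ^ r * ((2 * m).choose (m + r) : K) *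
        (x ^ (2 * (r : ℤ)) + x ^ (-(2 * (r : ℤ))))) := by
  rw [sub_inv_pow_two_mul hx, sum_range_two_mul_add_one_eq, mul_add, mul_sum]
  congr 1
  · simp
  refine sum_congr rfl fun r hr => ?_
  have hr : r ≤ m := (mem_Icc.mp hr).2
  have hchoose : (2 * m).choose (m - r) = (2 * m).choose (m + r) := by
    rw [← Nat.choose_symm (by omega)]; congr 1; omega
  have hsign : (-1 : K) ^ (m - r) = (-1) ^ m * (-1) ^ r := by
    rw [← pow_add]
    exact neg_one_pow_congr (by rw [Nat.even_sub hr, Nat.even_add])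
  rw [hchoose, hsign, Nat.cast_sub hr, Nat.cast_add]
  ring_nf

theorem Nat.choose_two_mul_self_mul {m : ℕ} (hm : 0 < m) :
    (2 * m).choose m * m = (2 * m).choose (m - 1) * (m + 1) := by
  have h := Nat.choose_succ_right_eq (2 * m) (m - 1)
  rwa [Nat.sub_add_cancel hm, show 2 * m - (m - 1) = m + 1 by omega] at h

theorem stmt2_general (m : ℕ) (hm : 0 < m) (γ : ℕ → ℝ)
    (hγ : ∀ r, 1 ≤ r → r ≤ m →
      γ r = (-1 : ℝ) ^ (r + 1) / r *
        ((Nat.choose (2 * m) (m + r) : ℝ) / (Nat.choose (2 * m) (m - 1) : ℝ))) :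
    ∀ z : ℝ, 0 < z →
      (∑ r ∈ Icc 1 m, (r : ℝ) * γ r * (z ^ (r : ℤ) + z ^ (-(r : ℤ))))
          - ((m : ℝ) + 1) / m
        = (-1 : ℝ) ^ (m + 1) * ((Nat.choose (2 * m) (m - 1) : ℝ))⁻¹ *
            (Real.sqrt z - (Real.sqrt z)⁻¹) ^ (2 * m) := by
  intro z hz
  have hcentral : ((2 * m).choose m : ℝ) * m = ((2 * m).choose (m - 1) : ℝ) * (m + 1) := by
    exact_mod_cast Nat.choose_two_mul_self_mul hm
  set C : ℝ := ((2 * m).choose (m - 1) : ℝ)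
  have hC : C ≠ 0 := Nat.cast_ne_zero.mpr (Nat.choose_pos (by omega)).ne'
  have hsqrt : ∀ n : ℤ, Real.sqrt z ^ (2 * n) = z ^ n := fun n => by
    rw [zpow_mul, zpow_ofNat, Real.sq_sqrt hz.le]
  have hsign : ∀ X : ℝ, (-1) ^ (m + 1) * C⁻¹ * ((-1) ^ m * X) = -(C⁻¹ * X) := fun X => by
    rw [mul_mul_mul_comm, ← pow_add, show m + 1 + m = 2 * m + 1 by ring, pow_succ, pow_mul]
    norm_num
  have hsum : ∑ r ∈ Icc 1 m, (r : ℝ) * γ r * (z ^ (r : ℤ) + z ^ (-(r : ℤ))) =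
      -C⁻¹ * ∑ r ∈ Icc 1 m, (-1) ^ r * ((2 * m).choose (m + r) : ℝ) *
        (z ^ (r : ℤ) + z ^ (-(r : ℤ))) := by
    rw [mul_sum]
    refine sum_congr rfl fun r hr => ?_
    obtain ⟨hr1, hrm⟩ := mem_Icc.mp hr
    have hr0 : (r : ℝ) ≠ 0 := Nat.cast_ne_zero.mpr (by omega)
    rw [hγ r hr1 hrm]
    field_simp
    ring
  rw [sub_inv_pow_two_mul_eq_sum_Icc (Real.sqrt_pos.mpr hz).ne', hsum]
  simp only [← mul_neg, hsqrt, hsign]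
  field_simp
  linear_combination hcentral

/-- Closed form for the logarithmic derivative of the action of the order-`m`
minimal multicritical Schur measure at the right edge `b = (m+1)/m`:
`∑_{r=1}^m r γ_r (z^r + z^{-r}) − (m+1)/m
  = (−1)^{m+1} C(2m, m−1)⁻¹ (z^{1/2} − z^{−1/2})^{2m}` for all `z > 0`. -/
theorem stmt2 (m : ℕ) (hm : 0 < m) (γ : ℕ → ℝ)
    (hγ : ∀ r, 1 ≤ r → r ≤ m →
      γ r = (-1 : ℝ) ^ (r + 1) / r *
        ((Nat.choose (2 * m) (m + r) : ℝ) / (Nat.choose (2 * m) (m - 1) : ℝ)))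
    (hγ0 : ∀ r, m < r → γ r = 0) :
    ∀ z : ℝ, 0 < z →
      (∑ r ∈ Icc 1 m, (r : ℝ) * γ r * (z ^ (r : ℤ) + z ^ (-(r : ℤ))))
          - ((m : ℝ) + 1) / m
        = (-1 : ℝ) ^ (m + 1) * ((Nat.choose (2 * m) (m - 1) : ℝ))⁻¹ *
            (Real.sqrt z - (Real.sqrt z)⁻¹) ^ (2 * m) :=
  stmt2_general m hm γ hγ
end

section
/- Let m be a positive integer and γ_r as in the minimal multicritical measure: γ_r = ((-1)^{r+1}/r) C(2m, m+r)/C(2m, m-1) for 1 ≤ r ≤ m, γ_r = 0 otherwise. Then 2∑_{r≥1} r γ_r = (m+1)/m. -/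
open Finset

/-!
Since `r γ_r = (-1)^(r+1) C(2m, m+r) / C(2m, m-1)`, Pascal's rule
`C(2m, m+r) = C(2m-1, m+r-1) + C(2m-1, m+r)` makes the sum `∑_r (-1)^(r+1) C(2m, m+r)`
telescope to `C(2m-1, m)`, and `2m C(2m-1, m) = m C(2m, m) = (m+1) C(2m, m-1)`.
-/

theorem sum_range_neg_one_pow_mul_choose_succ {R : Type*} [CommRing R] (n a k : ℕ) :
    ∑ i ∈ range k, (-1 : R) ^ i * ((n + 1).choose (a + i + 1) : R) =
      n.choose a - (-1) ^ k * (n.choose (a + k) : R) := by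
  induction k with
  | zero => simp
  | succ k ih =>
    rw [sum_range_succ, ih, Nat.choose_succ_succ', ← add_assoc]
    push_cast
    ring

theorem sum_Icc_neg_one_pow_mul_choose_two_mul {R : Type*} [CommRing R] {m : ℕ} (hm : 0 < m) :
    ∑ r ∈ Icc 1 m, (-1 : R) ^ (r + 1) * ((2 * m).choose (m + r) : R) =
      (2 * m - 1).choose m := by
  obtain ⟨n, rfl⟩ : ∃ n, m = n + 1 := ⟨m - 1, by omega⟩
  have htelescope := sum_range_neg_one_pow_mul_choose_succ (R := R) (2 * n + 1) (n + 1) (n + 1)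
  rw [Nat.choose_eq_zero_of_lt (show 2 * n + 1 < n + 1 + (n + 1) by omega), Nat.cast_zero,
    mul_zero, sub_zero] at htelescope
  rw [show 2 * (n + 1) - 1 = 2 * n + 1 by omega, ← htelescope, ← Ico_add_one_right_eq_Icc,
    sum_Ico_eq_sum_range, Nat.add_sub_cancel]
  refine sum_congr rfl fun i _ => ?_
  rw [show 2 * (n + 1) = 2 * n + 1 + 1 by ring, show n + 1 + (1 + i) = n + 1 + i + 1 by ring]
  ring

theorem two_mul_mul_choose_two_mul_sub_one {m : ℕ} (hm : 0 < m) :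
    2 * m * (2 * m - 1).choose m = (m + 1) * (2 * m).choose (m - 1) := by
  obtain ⟨n, rfl⟩ : ∃ n, m = n + 1 := ⟨m - 1, by omega⟩
  rw [show 2 * (n + 1) - 1 = 2 * n + 1 by omega, Nat.choose_symm_half, Nat.add_sub_cancel]
  calc 2 * (n + 1) * (2 * n + 1).choose n = (2 * n + 1 + 1).choose (n + 1) * (n + 1) := by
        rw [← Nat.add_one_mul_choose_eq]
        ring
    _ = (n + 1 + 1) * (2 * (n + 1)).choose n := by
        rw [Nat.choose_succ_right_eq, show 2 * n + 1 + 1 - n = n + 1 + 1 by omega,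
          show 2 * n + 1 + 1 = 2 * (n + 1) by ring, mul_comm]

theorem stmt3_general (m : ℕ) (hm : 0 < m) (γ : ℕ → ℝ)
    (hγ : ∀ r, 1 ≤ r → r ≤ m →
      γ r = (-1 : ℝ) ^ (r + 1) / r *
        ((Nat.choose (2 * m) (m + r) : ℝ) / (Nat.choose (2 * m) (m - 1) : ℝ))) :
    2 * ∑ r ∈ Icc 1 m, (r : ℝ) * γ r = ((m : ℝ) + 1) / m := by
  have hD : ((2 * m).choose (m - 1) : ℝ) ≠ 0 := by
    exact_mod_cast (Nat.choose_pos (by omega)).ne'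
  calc 2 * ∑ r ∈ Icc 1 m, (r : ℝ) * γ r
      = 2 * (∑ r ∈ Icc 1 m, (-1 : ℝ) ^ (r + 1) * ((2 * m).choose (m + r) : ℝ)) /
          (2 * m).choose (m - 1) := by
        rw [mul_div_assoc, sum_div]
        congr 1
        refine sum_congr rfl fun r hr => ?_
        obtain ⟨hr1, hrm⟩ := mem_Icc.mp hr
        have hr0 : (r : ℝ) ≠ 0 := by positivity
        rw [hγ r hr1 hrm]
        field_simp
    _ = 2 * (2 * m - 1).choose m / (2 * m).choose (m - 1) := by
        rw [sum_Icc_neg_one_pow_mul_choose_two_mul hm]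
    _ = (m + 1) / m := by
        rw [div_eq_div_iff hD (by positivity), mul_right_comm]
        exact_mod_cast two_mul_mul_choose_two_mul_sub_one hm

/-- The right edge coefficient of the order-`m` minimal multicritical Schur
measure: `b = 2 ∑_{r≥1} r γ_r = (m+1)/m`. -/
theorem stmt3 (m : ℕ) (hm : 0 < m) (γ : ℕ → ℝ)
    (hγ : ∀ r, 1 ≤ r → r ≤ m →
      γ r = (-1 : ℝ) ^ (r + 1) / r *
        ((Nat.choose (2 * m) (m + r) : ℝ) / (Nat.choose (2 * m) (m - 1) : ℝ)))
    (hγ0 : ∀ r, m < r → γ r = 0) :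
    2 * ∑ r ∈ Icc 1 m, (r : ℝ) * γ r = ((m : ℝ) + 1) / m :=
  stmt3_general m hm γ hγ
end

section
/- For the order-m symmetric minimal multicritical coefficients (γ_{2r−1} = ((−1)^{r+1}/(2r−1)^2) C(2m−1, m−r)/C(2m−1, m−1) for 1 ≤ r ≤ m, all other γ_r = 0), the derivative of D(φ) = ∑_{r≥1} 2 r γ_r cos(rφ) satisfies D'(φ) = −(4^m/2) C(2m−1, m−1)^{−1} sin^{2m−1}(φ), which is ≤ 0 for φ ∈ [0, π]. -/
/-!
With `z = exp (φ i)` we have `(2 i sin φ) ^ (2n+1) = (z - z⁻¹) ^ (2n+1)`. Taking imaginary parts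
of the binomial expansion and pairing the terms `k` and `2n+1-k` gives the power-reduction formula
`4ⁿ sin^(2n+1) φ = ∑_{j ≤ n} (-1)^j C(2n+1, n-j) sin((2j+1)φ)`. Differentiating `D` termwise, the
factor `r²` cancels the weight `1/(2j+1)²` of `γ_(2j+1)`, so `D'` is `-2 / C(2m-1, m-1)` times
this sum.
-/

open Finset Real

theorem two_mul_sin_mul_I_pow (N : ℕ) (φ : ℝ) :
    ((2 * sin φ : ℝ) * Complex.I) ^ N = ∑ k ∈ range (N + 1),
      ((-1) ^ (k + N) * N.choose k : ℂ) * Complex.exp (((2 * k - N : ℝ) * φ : ℝ) * Complex.I) := by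
  set z := Complex.exp (φ * Complex.I)
  have hz : ((2 * sin φ : ℝ) * Complex.I) = z - z⁻¹ := by
    rw [← Complex.exp_neg]
    push_cast
    rw [Complex.sin]
    ring_nf
    rw [Complex.I_sq]
    ring
  rw [hz, sub_pow]
  refine sum_congr rfl fun k hk => ?_
  have hkN : k ≤ N := Nat.lt_succ_iff.mp (mem_range.mp hk)
  have hpow : z ^ k * z⁻¹ ^ (N - k) = Complex.exp (((2 * k - N : ℝ) * φ : ℝ) * Complex.I) := by
    rw [← Complex.exp_nat_mul, ← Complex.exp_neg, ← Complex.exp_nat_mul, ← Complex.exp_add]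
    push_cast [hkN]
    ring_nf
  rw [mul_assoc ((-1) ^ (k + N)), hpow]
  ring

theorem sum_neg_one_pow_mul_choose_mul_sin (n : ℕ) (φ : ℝ) :
    ∑ k ∈ range (2 * n + 2), (-1) ^ (k + 1) * ((2 * n + 1).choose k : ℝ) *
        sin ((2 * k - (2 * n + 1) : ℝ) * φ) = (-1) ^ n * 2 ^ (2 * n + 1) * sin φ ^ (2 * n + 1) := by
  have h := congrArg Complex.im (two_mul_sin_mul_I_pow (2 * n + 1) φ)
  have hI : Complex.I ^ (2 * n + 1) = (-1) ^ n * Complex.I := by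
    rw [pow_succ, pow_mul, Complex.I_sq]
  rw [mul_pow, hI] at h
  simp only [Complex.im_sum, ← Complex.ofReal_pow, ← Complex.ofReal_neg, ← Complex.ofReal_one,
    ← Complex.ofReal_natCast, ← Complex.ofReal_mul, Complex.im_ofReal_mul,
    Complex.exp_ofReal_mul_I_im] at h
  have hsign : ∀ k : ℕ, (-1 : ℝ) ^ (k + (2 * n + 1)) = (-1) ^ (k + 1) := fun k => by
    rw [show k + (2 * n + 1) = k + 1 + 2 * n by ring, pow_add, pow_mul, neg_one_sq, one_pow,
      mul_one]
  simp only [hsign, Complex.I_im, mul_one] at h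
  push_cast at h
  rw [← h]
  ring

theorem four_pow_mul_sin_pow_odd (n : ℕ) (φ : ℝ) :
    4 ^ n * sin φ ^ (2 * n + 1) = ∑ j ∈ range (n + 1),
      (-1) ^ j * ((2 * n + 1).choose (n - j) : ℝ) * sin ((2 * j + 1) * φ) := by
  set f : ℕ → ℝ := fun k => (-1) ^ (k + 1) * ((2 * n + 1).choose k : ℝ) *
    sin ((2 * k - (2 * n + 1) : ℝ) * φ)
  set g : ℕ → ℝ := fun j => (-1) ^ j * ((2 * n + 1).choose (n - j) : ℝ) * sin ((2 * j + 1) * φ)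
  have hlow : ∀ j ∈ range (n + 1), f (n + 1 - 1 - j) = (-1) ^ n * g j := by
    intro j hj
    obtain ⟨i, rfl⟩ : ∃ i, n = j + i :=
      Nat.exists_eq_add_of_le (Nat.lt_succ_iff.mp (mem_range.mp hj))
    simp only [f, g, Nat.add_sub_cancel, Nat.add_sub_cancel_left]
    rw [show ((2 * i - (2 * (j + i : ℕ) + 1) : ℝ) * φ) = -((2 * j + 1) * φ) by push_cast; ring,
      sin_neg]
    ring_nf
    simp [Even.neg_one_pow (n := j * 2) ⟨j, by ring⟩]
  have hhigh : ∀ j ∈ range (n + 1), f (n + 1 + j) = (-1) ^ n * g j := by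
    intro j hj
    obtain ⟨i, rfl⟩ : ∃ i, n = j + i :=
      Nat.exists_eq_add_of_le (Nat.lt_succ_iff.mp (mem_range.mp hj))
    simp only [f, g, Nat.add_sub_cancel_left]
    rw [Nat.choose_symm_of_eq_add (show 2 * (j + i) + 1 = (j + i + 1 + j) + i by ring)]
    push_cast
    ring_nf
  have h := sum_neg_one_pow_mul_choose_mul_sin n φ
  rw [show 2 * n + 2 = (n + 1) + (n + 1) by ring, sum_range_add, ← sum_range_reflect,
    sum_congr rfl hlow, sum_congr rfl hhigh, ← mul_sum] at h
  have hsq : ((-1 : ℝ) ^ n) ^ 2 = 1 := by rw [← pow_mul, pow_mul', neg_one_sq, one_pow]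
  have h2 : (2 : ℝ) ^ (2 * n + 1) = 2 * 4 ^ n := by rw [pow_succ, pow_mul]; norm_num; ring
  rw [h2] at h
  linear_combination
    (-(-1) ^ n / 2) * h - (4 ^ n * sin φ ^ (2 * n + 1) - ∑ j ∈ range (n + 1), g j) * hsq

theorem hasDerivAt_sum_mul_cos (s : Finset ℕ) (a : ℕ → ℝ) (φ : ℝ) :
    HasDerivAt (fun ψ => ∑ r ∈ s, a r * cos (r * ψ)) (-∑ r ∈ s, a r * r * sin (r * φ)) φ := by
  rw [← sum_neg_distrib]
  refine HasDerivAt.fun_sum fun r _ => ?_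
  have h := (((hasDerivAt_id' φ).const_mul (r : ℝ)).cos).const_mul (a r)
  simp only [mul_one] at h
  exact h.congr_deriv (by ring)

theorem sum_Icc_one_two_mul_eq_sum_odd {M : Type*} [AddCommMonoid M] (b : ℕ → M) (m : ℕ)
    (hb : ∀ j < m, b (2 * j + 2) = 0) :
    ∑ r ∈ Icc 1 (2 * m), b r = ∑ j ∈ range m, b (2 * j + 1) := by
  induction m with
  | zero => simp
  | succ m ih =>
    rw [show 2 * (m + 1) = 2 * m + 1 + 1 by ring, sum_Icc_succ_top (by omega),
      sum_Icc_succ_top (by omega), ih fun j hj => hb j (by omega), hb m (by omega), add_zero,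
      sum_range_succ]

theorem deriv_sum_mul_cos_of_multicritical (n : ℕ) (γ : ℕ → ℝ)
    (hodd : ∀ j ≤ n, γ (2 * j + 1) = (-1) ^ j / ((2 * j + 1 : ℕ) : ℝ) ^ 2 *
      (((2 * n + 1).choose (n - j) : ℝ) / ((2 * n + 1).choose n : ℝ)))
    (heven : ∀ j ≤ n, γ (2 * j + 2) = 0) (φ : ℝ) :
    deriv (fun ψ : ℝ => ∑ r ∈ Icc 1 (2 * (n + 1)), 2 * (r : ℝ) * γ r * cos (r * ψ)) φ
      = -((4 : ℝ) ^ (n + 1) / 2) * ((2 * n + 1).choose n : ℝ)⁻¹ * sin φ ^ (2 * n + 1) := by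
  have hC : ((2 * n + 1).choose n : ℝ) ≠ 0 := by
    exact_mod_cast (Nat.choose_pos (by omega)).ne'
  have hterm : ∀ j ∈ range (n + 1),
      2 * ((2 * j + 1 : ℕ) : ℝ) * γ (2 * j + 1) * ((2 * j + 1 : ℕ) : ℝ) *
          sin (((2 * j + 1 : ℕ) : ℝ) * φ) = 2 / ((2 * n + 1).choose n : ℝ) *
        ((-1) ^ j * ((2 * n + 1).choose (n - j) : ℝ) * sin ((2 * j + 1) * φ)) := by
    intro j hj
    rw [hodd j (Nat.lt_succ_iff.mp (mem_range.mp hj))]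
    push_cast
    field_simp
  rw [(hasDerivAt_sum_mul_cos _ (fun r => 2 * r * γ r) φ).deriv,
    sum_Icc_one_two_mul_eq_sum_odd _ _ fun j hj => by simp [heven j (by omega)],
    sum_congr rfl hterm, ← mul_sum, ← four_pow_mul_sin_pow_odd, pow_succ]
  field_simp
  ring

/-- For the order-`m` symmetric minimal multicritical coefficients, the
derivative of `D(φ) = ∑_{r≥1} 2 r γ_r cos(rφ)` satisfies
`D'(φ) = −(4^m/2) C(2m−1, m−1)⁻¹ sin^{2m−1}(φ)`, which is `≤ 0` on `[0, π]`. -/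
theorem stmt6 (m : ℕ) (hm : 0 < m) (γ : ℕ → ℝ)
    (hγ : ∀ r, 1 ≤ r → r ≤ m →
      γ (2 * r - 1) = (-1 : ℝ) ^ (r + 1) / ((2 * r - 1 : ℕ) : ℝ) ^ 2 *
        ((Nat.choose (2 * m - 1) (m - r) : ℝ) / (Nat.choose (2 * m - 1) (m - 1) : ℝ)))
    (hγ0 : ∀ s, (∀ r, 1 ≤ r → r ≤ m → s ≠ 2 * r - 1) → γ s = 0) :
    (∀ φ : ℝ,
      deriv (fun ψ : ℝ => ∑ r ∈ Icc 1 (2 * m), 2 * (r : ℝ) * γ r * Real.cos (r * ψ)) φ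
        = -((4 : ℝ) ^ m / 2) * ((Nat.choose (2 * m - 1) (m - 1) : ℝ))⁻¹ *
            (Real.sin φ) ^ (2 * m - 1)) ∧
    ∀ φ ∈ Set.Icc (0 : ℝ) π,
      deriv (fun ψ : ℝ => ∑ r ∈ Icc 1 (2 * m), 2 * (r : ℝ) * γ r * Real.cos (r * ψ)) φ ≤ 0 := by
  obtain ⟨n, rfl⟩ : ∃ n, m = n + 1 := ⟨m - 1, by omega⟩
  have hodd : ∀ j ≤ n, γ (2 * j + 1) = (-1) ^ j / ((2 * j + 1 : ℕ) : ℝ) ^ 2 *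
      (((2 * n + 1).choose (n - j) : ℝ) / ((2 * n + 1).choose n : ℝ)) := fun j hj => by
    have h := hγ (j + 1) (by omega) (by omega)
    rw [show 2 * (j + 1) - 1 = 2 * j + 1 by omega, show 2 * (n + 1) - 1 = 2 * n + 1 by omega,
      Nat.add_sub_add_right, Nat.add_sub_cancel] at h
    rw [h]
    ring
  have heven : ∀ j ≤ n, γ (2 * j + 2) = 0 := fun j _ => hγ0 _ fun r _ _ => by omega
  have hD := deriv_sum_mul_cos_of_multicritical n γ hodd heven
  rw [show 2 * (n + 1) - 1 = 2 * n + 1 by omega, Nat.add_sub_cancel]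
  refine ⟨hD, fun φ hφ => ?_⟩
  have hsin := sin_nonneg_of_nonneg_of_le_pi hφ.1 hφ.2
  rw [hD, neg_mul, neg_mul, neg_nonpos]
  positivity
end

section
/- For real α ∈ (−π, π) with α ≠ π, the principal value integral ⨍_{−π}^{π} cos(β − π) cot((α − β)/2) dβ equals 2π sin(α − π). -/
/-!
Writing `cos (β - π) = -(cos α cos (α - β) + sin α sin (α - β))` and using the double-angle
formulas for `α - β = 2 · ((α - β) / 2)`, the integrand has the elementary primitive
`2 cos α log |sin ((α - β) / 2)| + cos α cos (α - β) - sin α · β + sin α sin (α - β)`.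
Its only non-periodic part is `-sin α · β`, so the two endpoints `±π` contribute
`-2π sin α = 2π sin (α - π)`, while the two inner endpoints `α ∓ ε` contribute
`2 sin α (ε + sin ε)`, which vanishes as `ε → 0⁺`.
-/

open Real Filter Set

noncomputable section

def cosCot (α β : ℝ) : ℝ :=
  cos (β - π) * (cos ((α - β) / 2) / sin ((α - β) / 2))

/-- `Real.log` is `log |·|`, so this is a primitive of `cosCot α` on both sides of `β = α`. -/
def cosCotPrimitive (α β : ℝ) : ℝ :=
  2 * cos α * log (sin ((α - β) / 2)) + cos α * cos (α - β) - sin α * β + sin α * sin (α - β)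

lemma cos_sub_pi_eq (α β : ℝ) :
    cos (β - π) = -(cos α * cos (α - β) + sin α * sin (α - β)) := by
  rw [← cos_sub, sub_sub_cancel, cos_sub_pi]

lemma hasDerivAt_cosCotPrimitive {α β : ℝ} (hs : sin ((α - β) / 2) ≠ 0) :
    HasDerivAt (cosCotPrimitive α) (cosCot α β) β := by
  have hhalf : HasDerivAt (fun x : ℝ => (α - x) / 2) (-1 / 2) β := by
    simpa using ((hasDerivAt_id β).const_sub α).div_const 2
  have hsub : HasDerivAt (fun x : ℝ => α - x) (-1) β := by
    simpa using (hasDerivAt_id β).const_sub α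
  have H := ((((hhalf.sin.log hs).const_mul (2 * cos α)).add (hsub.cos.const_mul (cos α))).sub
    ((hasDerivAt_id β).const_mul (sin α))).add (hsub.sin.const_mul (sin α))
  refine H.congr_deriv ?_
  rw [cosCot, cos_sub_pi_eq α, show α - β = 2 * ((α - β) / 2) by ring, cos_two_mul, sin_two_mul]
  field_simp
  linear_combination (2 * cos ((α - β) / 2) * cos α) * sin_sq_add_cos_sq ((α - β) / 2)

lemma integral_cosCot {α a b : ℝ} (hs : ∀ x ∈ uIcc a b, sin ((α - x) / 2) ≠ 0) :
    ∫ x in a..b, cosCot α x = cosCotPrimitive α b - cosCotPrimitive α a := by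
  refine intervalIntegral.integral_eq_sub_of_hasDerivAt
    (fun x hx => hasDerivAt_cosCotPrimitive (hs x hx)) (ContinuousOn.intervalIntegrable ?_)
  exact (continuous_cos.comp (continuous_sub_right π)).continuousOn.mul <|
    (continuous_cos.comp ((continuous_sub_left α).div_const 2)).continuousOn.div
      (continuous_sin.comp ((continuous_sub_left α).div_const 2)).continuousOn hs

lemma sin_half_sub_ne_zero {α x : ℝ} (hne : x ≠ α) (hlt : |α - x| < 2 * π) :
    sin ((α - x) / 2) ≠ 0 := by
  obtain ⟨h₁, h₂⟩ := abs_lt.mp hlt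
  rw [Ne, sin_eq_zero_iff_of_lt_of_lt (by linarith) (by linarith)]
  exact fun h => hne (by linarith)

lemma cosCotPrimitive_add_two_pi (α β : ℝ) :
    cosCotPrimitive α (β + 2 * π) = cosCotPrimitive α β - 2 * π * sin α := by
  have hlog : log (sin ((α - (β + 2 * π)) / 2)) = log (sin ((α - β) / 2)) := by
    rw [show (α - (β + 2 * π)) / 2 = (α - β) / 2 - π by ring, sin_sub_pi, log_neg_eq_log]
  rw [cosCotPrimitive, cosCotPrimitive, hlog, show α - (β + 2 * π) = α - β - 2 * π by ring,
    cos_sub_two_pi, sin_sub_two_pi]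
  ring

lemma cosCotPrimitive_sub_sub_add (α ε : ℝ) :
    cosCotPrimitive α (α - ε) - cosCotPrimitive α (α + ε) = 2 * sin α * (ε + sin ε) := by
  have hlog : log (sin ((α - (α + ε)) / 2)) = log (sin ((α - (α - ε)) / 2)) := by
    rw [show (α - (α + ε)) / 2 = -((α - (α - ε)) / 2) by ring, sin_neg, log_neg_eq_log]
  rw [cosCotPrimitive, cosCotPrimitive, hlog, sub_sub_cancel, sub_add_cancel_left, cos_neg,
    sin_neg]
  ring

lemma truncated_integral_cosCot {α ε : ℝ} (hε : 0 < ε) (hε₁ : ε < α + π) (hε₂ : ε < π - α) :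
    (∫ β in (-π)..(α - ε), cosCot α β) + ∫ β in (α + ε)..π, cosCot α β =
      2 * π * sin (α - π) + 2 * sin α * (ε + sin ε) := by
  have hleft : ∀ x ∈ uIcc (-π) (α - ε), sin ((α - x) / 2) ≠ 0 := by
    intro x hx
    rw [uIcc_of_le (by linarith)] at hx
    exact sin_half_sub_ne_zero (by linarith [hx.2])
      (abs_lt.mpr ⟨by linarith [hx.2], by linarith [hx.1]⟩)
  have hright : ∀ x ∈ uIcc (α + ε) π, sin ((α - x) / 2) ≠ 0 := by
    intro x hx
    rw [uIcc_of_le (by linarith)] at hx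
    exact sin_half_sub_ne_zero (by linarith [hx.1])
      (abs_lt.mpr ⟨by linarith [hx.2], by linarith [hx.1]⟩)
  have hends := cosCotPrimitive_add_two_pi α (-π)
  rw [neg_add_eq_sub, two_mul, add_sub_cancel_right] at hends
  rw [integral_cosCot hleft, integral_cosCot hright, sin_sub_pi]
  linear_combination hends + cosCotPrimitive_sub_sub_add α ε

end

/-- The principal value integral
`⨍_{−π}^{π} cos(β − π) cot((α − β)/2) dβ = 2π sin(α − π)` for `α ∈ (−π, π)`,
stated as the convergence of the symmetrically truncated integrals. -/
theorem stmt15 (α : ℝ) (hα1 : -π < α) (hα2 : α < π) :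
    Tendsto
      (fun ε : ℝ =>
        (∫ β in (-π)..(α - ε),
            Real.cos (β - π) * (Real.cos ((α - β) / 2) / Real.sin ((α - β) / 2))) +
          ∫ β in (α + ε)..π,
            Real.cos (β - π) * (Real.cos ((α - β) / 2) / Real.sin ((α - β) / 2)))
      (nhdsWithin 0 (Set.Ioi 0))
      (nhds (2 * π * Real.sin (α - π))) := by
  have hsmall : Ioo 0 (min (α + π) (π - α)) ∈ nhdsWithin (0 : ℝ) (Ioi 0) :=
    Ioo_mem_nhdsGT (lt_min (by linarith) (by linarith))
  have hclosed : Tendsto (fun ε => 2 * π * sin (α - π) + 2 * sin α * (ε + sin ε))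
      (nhdsWithin 0 (Ioi 0)) (nhds (2 * π * sin (α - π))) := by
    refine (Continuous.tendsto' ?_ 0 _ ?_).mono_left nhdsWithin_le_nhds
    · fun_prop
    · simp
  refine hclosed.congr' (eventuallyEq_of_mem hsmall fun ε ⟨hε, hεmin⟩ => ?_)
  exact (truncated_integral_cosCot hε (hεmin.trans_le (min_le_left _ _))
    (hεmin.trans_le (min_le_right _ _))).symm
end

section
/- Let m be a positive integer and γ define an order-m multicritical Schur measure (i.e., ∑_r r^{2p+1} γ_r = 0 for p = 1,…,m−1, ∑_r r^{2m+1} γ_r ≠ 0, and ∑_r r² γ_r sin(rφ) ≥ 0 for φ ∈ [0,π]). Let b = 2∑_r r γ_r, d = (2(−1)^{m+1}/(2m)!) ∑_r r^{2m+1} γ_r, and ρ(x) = χ(x)/π where χ(x) ∈ [0,π] solves ∑_r 2r γ_r cos(r χ) = x. Then as x → b⁻, χ(x) ~ ((b − x)/d)^{1/(2m)}. -/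
/-!
Write `D(φ) = ∑ 2 r γ_r cos (r φ)`. Expanding each cosine to order `2m`, the vanishing odd
moments kill every Taylor coefficient below the top one, so `D(0) - D(φ) ~ d φ^(2m)` as `φ → 0`.
The positivity hypothesis says `D' ≤ 0` on `[0, π]`, so `D(0) - D(φ) ≥ 0`, which forces `d > 0`.
Hence `D(φ) < D(0)` for small `φ > 0`, and monotonicity gives `χ(x) → 0⁺` as `x → b⁻`.
Substituting `φ = χ(x)` yields `b - x ~ d χ(x)^(2m)`; take `2m`-th roots.
-/

open Finset Real Filter Topology Asymptotics

noncomputable def cosTaylor (n : ℕ) (t : ℝ) : ℝ :=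
  ∑ k ∈ range (n + 1), (-1) ^ k * t ^ (2 * k) / ((2 * k).factorial : ℝ)

theorem abs_cos_sub_cosTaylor_le (n : ℕ) {t : ℝ} (ht : |t| ≤ 1) :
    |cos t - cosTaylor n t| ≤ 2 * |t| ^ (2 * n + 2) := by
  set a : ℕ → ℝ := fun k => (-1) ^ k * t ^ (2 * k) / ((2 * k).factorial : ℝ)
  have hcos : HasSum a (cos t) := hasSum_cos t
  have htail : cos t - cosTaylor n t = ∑' k, a (k + (n + 1)) := by
    rw [← hcos.tsum_eq, ← hcos.summable.sum_add_tsum_nat_add (n + 1), cosTaylor,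
      add_sub_cancel_left]
  have hterm (k : ℕ) : ‖a (k + (n + 1))‖ ≤ |t| ^ (2 * n + 2) * (1 / 2) ^ k := by
    have hpow : |t| ^ (2 * (k + (n + 1))) ≤ |t| ^ (2 * n + 2) := by
      rw [show 2 * (k + (n + 1)) = 2 * n + 2 + 2 * k by ring, pow_add]
      exact mul_le_of_le_one_right (by positivity) (pow_le_one₀ (abs_nonneg t) ht)
    have hfact : (2 : ℝ) ^ k ≤ (2 * (k + (n + 1))).factorial := by
      have h := (Nat.factorial_mul_pow_le_factorial (m := 1) (n := k)).trans
        (Nat.factorial_le (m := 1 + k) (n := 2 * (k + (n + 1))) (by omega))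
      exact_mod_cast (by simpa using h : 2 ^ k ≤ (2 * (k + (n + 1))).factorial)
    simp only [a, norm_div, norm_mul, norm_pow, norm_neg, norm_one, one_pow, one_mul,
      Real.norm_eq_abs, Nat.abs_cast, one_div_pow, mul_one_div]
    exact div_le_div₀ (by positivity) hpow (by positivity) hfact
  rw [htail, ← norm_eq_abs, mul_comm]
  exact tsum_of_norm_bounded (hasSum_geometric_two.mul_left _) hterm

theorem isBigO_cos_sub_cosTaylor (n : ℕ) :
    (fun t => cos t - cosTaylor n t) =O[𝓝 0] fun t => t ^ (2 * n + 2) := by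
  refine IsBigO.of_bound 2 ?_
  filter_upwards [Metric.closedBall_mem_nhds (0 : ℝ) one_pos] with t ht
  rw [Metric.mem_closedBall, dist_zero_right, norm_eq_abs] at ht
  simpa [norm_pow] using abs_cos_sub_cosTaylor_le n ht

theorem one_sub_cosTaylor (n : ℕ) (t : ℝ) :
    1 - cosTaylor n t =
      ∑ k ∈ range n, (-1) ^ k * t ^ (2 * k + 2) / ((2 * k + 2).factorial : ℝ) := by
  rw [cosTaylor, sum_range_succ']
  simp [mul_add, pow_succ, ← sum_neg_distrib, neg_div]

noncomputable def cosSum (N : ℕ) (γ : ℕ → ℝ) (φ : ℝ) : ℝ :=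
  ∑ r ∈ Icc 1 N, 2 * (r : ℝ) * γ r * cos (r * φ)

noncomputable def edgeCoeff (m N : ℕ) (γ : ℕ → ℝ) : ℝ :=
  2 * (-1 : ℝ) ^ (m + 1) / (Nat.factorial (2 * m) : ℝ) *
    ∑ r ∈ Icc 1 N, (r : ℝ) ^ (2 * m + 1) * γ r

theorem cosSum_zero (N : ℕ) (γ : ℕ → ℝ) : cosSum N γ 0 = 2 * ∑ r ∈ Icc 1 N, (r : ℝ) * γ r := by
  simp [cosSum, mul_sum, mul_assoc]

section

variable {m N : ℕ} {γ : ℕ → ℝ}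

theorem sum_mul_one_sub_cosTaylor (hm : 0 < m)
    (hvan : ∀ p, 1 ≤ p → p ≤ m - 1 → ∑ r ∈ Icc 1 N, (r : ℝ) ^ (2 * p + 1) * γ r = 0) (φ : ℝ) :
    ∑ r ∈ Icc 1 N, 2 * (r : ℝ) * γ r * (1 - cosTaylor m (r * φ)) =
      edgeCoeff m N γ * φ ^ (2 * m) := by
  obtain ⟨k, rfl⟩ : ∃ k, m = k + 1 := ⟨m - 1, by omega⟩
  have hmoment (j : ℕ) : ∑ r ∈ Icc 1 N, 2 * (r : ℝ) * γ r *
      ((-1) ^ j * (r * φ) ^ (2 * j + 2) / ((2 * j + 2).factorial : ℝ)) =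
      2 * (-1) ^ j / ((2 * j + 2).factorial : ℝ) * φ ^ (2 * j + 2) *
        ∑ r ∈ Icc 1 N, (r : ℝ) ^ (2 * (j + 1) + 1) * γ r := by
    rw [mul_sum]; refine sum_congr rfl fun r _ => ?_; ring
  simp_rw [one_sub_cosTaylor, mul_sum]
  rw [sum_comm, sum_range_succ, sum_eq_zero fun j hj => ?_, zero_add, hmoment, edgeCoeff]
  · rw [show 2 * (k + 1) = 2 * k + 2 by ring]
    ring
  · rw [hmoment, hvan (j + 1) (by omega) (by have := mem_range.1 hj; omega), mul_zero]

theorem isBigO_cosSum_sub (hm : 0 < m)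
    (hvan : ∀ p, 1 ≤ p → p ≤ m - 1 → ∑ r ∈ Icc 1 N, (r : ℝ) ^ (2 * p + 1) * γ r = 0) :
    (fun φ => cosSum N γ 0 - cosSum N γ φ - edgeCoeff m N γ * φ ^ (2 * m)) =O[𝓝 0]
      fun φ => φ ^ (2 * m + 2) := by
  have hsplit (φ : ℝ) : cosSum N γ 0 - cosSum N γ φ - edgeCoeff m N γ * φ ^ (2 * m) =
      ∑ r ∈ Icc 1 N, -(2 * (r : ℝ) * γ r) * (cos (r * φ) - cosTaylor m (r * φ)) := by
    rw [← sum_mul_one_sub_cosTaylor hm hvan, cosSum, cosSum, ← sum_sub_distrib, ← sum_sub_distrib]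
    refine sum_congr rfl fun r _ => ?_
    simp only [mul_zero, cos_zero]; ring
  simp_rw [hsplit]
  refine IsBigO.fun_sum fun r _ => ?_
  refine IsBigO.const_mul_left ?_ _
  have hlin : Tendsto (fun φ : ℝ => (r : ℝ) * φ) (𝓝 0) (𝓝 0) := by
    simpa using (tendsto_id (x := 𝓝 (0 : ℝ))).const_mul (r : ℝ)
  refine ((isBigO_cos_sub_cosTaylor m).comp_tendsto hlin).trans ?_
  simpa only [Function.comp_def, mul_pow] using isBigO_const_mul_self _ _ _

theorem edgeCoeff_ne_zero (hnz : ∑ r ∈ Icc 1 N, (r : ℝ) ^ (2 * m + 1) * γ r ≠ 0) :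
    edgeCoeff m N γ ≠ 0 := by
  unfold edgeCoeff; positivity

theorem isEquivalent_cosSum_sub (hm : 0 < m)
    (hvan : ∀ p, 1 ≤ p → p ≤ m - 1 → ∑ r ∈ Icc 1 N, (r : ℝ) ^ (2 * p + 1) * γ r = 0)
    (hnz : ∑ r ∈ Icc 1 N, (r : ℝ) ^ (2 * m + 1) * γ r ≠ 0) :
    (fun φ => cosSum N γ 0 - cosSum N γ φ) ~[𝓝 0] fun φ => edgeCoeff m N γ * φ ^ (2 * m) :=
  (isBigO_cosSum_sub hm hvan).trans_isLittleO <|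
    (isLittleO_pow_pow (by omega)).trans_isBigO (isBigO_self_const_mul (edgeCoeff_ne_zero hnz) _ _)

theorem antitoneOn_cosSum
    (hpos : ∀ φ ∈ Set.Icc (0 : ℝ) π, 0 ≤ ∑ r ∈ Icc 1 N, (r : ℝ) ^ 2 * γ r * sin (r * φ)) :
    AntitoneOn (cosSum N γ) (Set.Icc 0 π) := by
  have hderiv (φ : ℝ) : HasDerivAt (cosSum N γ)
      (-(2 * ∑ r ∈ Icc 1 N, (r : ℝ) ^ 2 * γ r * sin (r * φ))) φ := by
    refine (HasDerivAt.fun_sum fun r (_ : r ∈ Icc 1 N) =>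
      (((hasDerivAt_id φ).const_mul (r : ℝ)).cos).const_mul (2 * (r : ℝ) * γ r)).congr_deriv ?_
    rw [mul_sum, ← sum_neg_distrib]
    refine sum_congr rfl fun r _ => ?_
    simp only [id]; ring
  refine antitoneOn_of_deriv_nonpos (convex_Icc 0 π)
    (fun φ _ => (hderiv φ).continuousAt.continuousWithinAt)
    (fun φ _ => (hderiv φ).differentiableAt.differentiableWithinAt) fun φ hφ => ?_
  rw [(hderiv φ).deriv, neg_nonpos]
  exact mul_nonneg two_pos.le (hpos φ (interior_subset hφ))

end

theorem pos_of_isEquivalent_const_mul_pow {u : ℝ → ℝ} {c : ℝ} {n : ℕ}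
    (h : u ~[𝓝[>] 0] fun φ => c * φ ^ n) (hu : ∀ᶠ φ in 𝓝[>] 0, 0 ≤ u φ) (hc : c ≠ 0) :
    0 < c := by
  refine hc.lt_or_gt.resolve_left fun hneg => ?_
  have hu_neg : ∀ᶠ φ in 𝓝[>] 0, u φ < 0 :=
    h.eventually_neg <| eventually_mem_nhdsWithin.mono fun φ hφ =>
      mul_neg_of_neg_of_pos hneg (pow_pos hφ n)
  obtain ⟨φ, hφ, hφ_neg⟩ := (hu.and hu_neg).exists
  exact hφ_neg.not_ge hφ

theorem tendsto_nhdsGT_zero_of_antitoneOn {f g : ℝ → ℝ} {a : ℝ} {l : Filter ℝ}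
    (hf : AntitoneOn f (Set.Icc 0 a)) (hlt : ∀ᶠ ε in 𝓝[>] 0, f ε < f 0) (hl : l ≤ 𝓝[<] f 0)
    (hg : ∀ᶠ x in l, g x ∈ Set.Icc 0 a ∧ f (g x) = x) :
    Tendsto g l (𝓝[>] 0) := by
  refine tendsto_nhdsWithin_iff.2 ⟨tendsto_order.2 ⟨fun c hc => ?_, fun c hc => ?_⟩, ?_⟩
  · exact hg.mono fun x hx => hc.trans_le hx.1.1
  · obtain ⟨ε, hfε, hε⟩ := (hlt.and (Ioo_mem_nhdsGT hc)).exists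
    filter_upwards [hg, hl (Ioo_mem_nhdsLT hfε)] with x ⟨⟨hgx0, hgxa⟩, hfgx⟩ hx
    by_contra! hcx
    have := hf ⟨hε.1.le, (hε.2.trans_le hcx).le.trans hgxa⟩ ⟨hgx0, hgxa⟩ (hε.2.trans_le hcx).le
    linarith [hx.1]
  · filter_upwards [hg, hl self_mem_nhdsWithin] with x ⟨⟨hgx0, _⟩, hfgx⟩ (hx : x < f 0)
    refine hgx0.lt_of_ne fun h => ?_
    rw [← h] at hfgx
    exact hx.ne' hfgx

theorem tendsto_div_rpow_of_isEquivalent {f χ : ℝ → ℝ} {a c : ℝ} {n : ℕ} {l : Filter ℝ}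
    (h : (fun φ => a - f φ) ~[𝓝[>] 0] fun φ => c * φ ^ n) (hc : c ≠ 0) (hn : n ≠ 0)
    (hχ : Tendsto χ l (𝓝[>] 0)) (hsol : ∀ᶠ x in l, f (χ x) = x) :
    Tendsto (fun x => χ x / ((a - x) / c) ^ (1 / (n : ℝ))) l (𝓝 1) := by
  have hχpos : ∀ᶠ x in l, 0 < χ x := hχ self_mem_nhdsWithin
  -- `|χ x|` rather than `χ x`: `IsEquivalent.rpow` needs a comparison function that is
  -- nonnegative everywhere, not just eventually.
  have hpow : (fun x => (a - x) / c) ~[l] fun x => |χ x| ^ n := by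
    refine ((IsEquivalent.refl (u := fun _ => c⁻¹)).mul (h.comp_tendsto hχ)).congr_left ?_
      |>.congr_right ?_
    · filter_upwards [hsol] with x hx
      simp [hx, div_eq_inv_mul]
    · filter_upwards [hχpos] with x hx
      simp [abs_of_pos hx, hc]
  have hroot : χ ~[l] fun x => ((a - x) / c) ^ (1 / (n : ℝ)) := by
    refine (hpow.rpow (fun x => by positivity) (r := 1 / (n : ℝ))).symm.congr_left ?_
    filter_upwards [hχpos] with x hx
    simp [abs_of_pos hx, one_div, pow_rpow_inv_natCast hx.le hn]
  refine (isEquivalent_iff_tendsto_one ?_).1 hroot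
  filter_upwards [hpow.eventually_pos (hχpos.mono fun x hx => by positivity)] with x hx
  exact (rpow_pos_of_pos hx _).ne'

/-- Edge vanishing asymptotics for an order-`m` multicritical Schur measure:
if `χ(x) ∈ [0,π]` solves `∑_r 2 r γ_r cos(r χ(x)) = x` on `[−b̃, b)`, then
`χ(x) ~ ((b − x)/d)^{1/(2m)}` as `x → b⁻`, i.e. the ratio tends to `1`. -/
theorem stmt16 (m N : ℕ) (hm : 0 < m) (γ : ℕ → ℝ)
    (hvan : ∀ p, 1 ≤ p → p ≤ m - 1 →
      ∑ r ∈ Icc 1 N, (r : ℝ) ^ (2 * p + 1) * γ r = 0)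
    (hnz : ∑ r ∈ Icc 1 N, (r : ℝ) ^ (2 * m + 1) * γ r ≠ 0)
    (hpos : ∀ φ ∈ Set.Icc (0 : ℝ) π,
      0 ≤ ∑ r ∈ Icc 1 N, (r : ℝ) ^ 2 * γ r * Real.sin (r * φ))
    (b d : ℝ)
    (hb : b = 2 * ∑ r ∈ Icc 1 N, (r : ℝ) * γ r)
    (hd : d = 2 * (-1 : ℝ) ^ (m + 1) / (Nat.factorial (2 * m) : ℝ) *
      ∑ r ∈ Icc 1 N, (r : ℝ) ^ (2 * m + 1) * γ r)
    (χ : ℝ → ℝ)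
    (hχ : ∀ x ∈ Set.Ico (2 * ∑ r ∈ Icc 1 N, (-1 : ℝ) ^ r * r * γ r) b,
      χ x ∈ Set.Icc (0 : ℝ) π ∧
        ∑ r ∈ Icc 1 N, 2 * (r : ℝ) * γ r * Real.cos (r * χ x) = x) :
    Tendsto (fun x : ℝ => χ x / ((b - x) / d) ^ (1 / (2 * (m : ℝ))))
      (nhdsWithin b (Set.Ico (2 * ∑ r ∈ Icc 1 N, (-1 : ℝ) ^ r * r * γ r) b))
      (nhds 1) := by
  obtain rfl : b = cosSum N γ 0 := hb.trans (cosSum_zero N γ).symm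
  obtain rfl : d = edgeCoeff m N γ := hd
  have hequiv := (isEquivalent_cosSum_sub hm hvan hnz).mono (nhdsWithin_le_nhds (s := Set.Ioi 0))
  have hanti := antitoneOn_cosSum hpos
  have hd_pos : 0 < edgeCoeff m N γ := by
    refine pos_of_isEquivalent_const_mul_pow hequiv ?_ (edgeCoeff_ne_zero hnz)
    filter_upwards [Ioo_mem_nhdsGT pi_pos] with φ hφ
    exact sub_nonneg.2 (hanti ⟨le_rfl, pi_pos.le⟩ (Set.Ioo_subset_Icc_self hφ) hφ.1.le)
  have hlt : ∀ᶠ φ in 𝓝[>] 0, cosSum N γ φ < cosSum N γ 0 :=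
    (hequiv.eventually_pos (eventually_mem_nhdsWithin.mono fun φ hφ =>
      mul_pos hd_pos (pow_pos hφ _))).mono fun _ => sub_pos.1
  have hsol : ∀ᶠ x in 𝓝[Set.Ico _ _] cosSum N γ 0, χ x ∈ Set.Icc 0 π ∧ cosSum N γ (χ x) = x :=
    eventually_mem_nhdsWithin.mono hχ
  have hχ0 := tendsto_nhdsGT_zero_of_antitoneOn hanti hlt
    (nhdsWithin_mono _ Set.Ico_subset_Iio_self) hsol
  have := tendsto_div_rpow_of_isEquivalent hequiv (edgeCoeff_ne_zero hnz) (by omega) hχ0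
    (hsol.mono fun _ hx => hx.2)
  convert this using 5
  push_cast; rfl
end
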